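/- arXiv:1904.10157 — 3 statements merged into one kernel-verified Lean document; each statement's English description precedes it below -/
import Mathlib

section
/- Let N be a positive integer, let x ∈ ℝ^N with x_k ∈ {−1, 1} for all k, and let y ∈ ℝ^N with −1 ≤ y_k ≤ 1 for all k. If |(F x)_n| = |(F y)_n| for all n = 0,…,N−1, then y_k ∈ {−1, 1} for all k, and the number of indices k with y_k = 1 equals either the number of indices k with x_k = 1 or the number of indices k with x_k = −1. -/
/-!
Parseval's identity gives `∑ y_k² = ∑ x_k² = N`, and since every `y_k² ≤ 1` this forces
`y_k² = 1`. The zeroth Fourier coefficient is the sum of the entries, so `|∑ x_k| = |∑ y_k|`;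
for a `±1` vector that sum is `#{+1} - #{-1}` while `#{+1} + #{-1} = N`, which pins down
`#{k | y_k = 1}` up to the symmetry `x ↦ -x`.
-/

open scoped BigOperators
open Finset

/-- Discrete Fourier transform of `x ∈ ℂ^N`. -/
noncomputable def dft {N : ℕ} (x : Fin N → ℂ) (n : Fin N) : ℂ :=
  ∑ k : Fin N, x k * Complex.exp (-2 * Real.pi * Complex.I * ((k : ℕ) : ℂ) * ((n : ℕ) : ℂ) / (N : ℂ))

/-- Inverse discrete Fourier transform. -/
noncomputable def idft {N : ℕ} (u : Fin N → ℂ) (j : Fin N) : ℂ :=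
  (1 / (N : ℂ)) * ∑ n : Fin N, u n * Complex.exp (2 * Real.pi * Complex.I * ((j : ℕ) : ℂ) * ((n : ℕ) : ℂ) / (N : ℂ))

/-- `M`-point oversampled discrete Fourier transform of `x ∈ ℂ^N`. -/
noncomputable def odft {N : ℕ} (M : ℕ) (x : Fin N → ℂ) (n : Fin M) : ℂ :=
  ∑ k : Fin N, x k * Complex.exp (-2 * Real.pi * Complex.I * ((k : ℕ) : ℂ) * ((n : ℕ) : ℂ) / (M : ℂ))

/-- Periodic autocorrelation of `x ∈ ℂ^N`. -/
noncomputable def autp {N : ℕ} (x : Fin N → ℂ) (j : Fin N) : ℂ :=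
  ∑ k : Fin N, x (k + j) * (starRingEnd ℂ) (x k)

/-- Extension of `x ∈ ℂ^N` to `ℤ` by zero. -/
noncomputable def extz {N : ℕ} (x : Fin N → ℂ) (i : ℤ) : ℂ :=
  if h : 0 ≤ i ∧ i < (N : ℤ) then x ⟨i.toNat, by omega⟩ else 0

/-- (Regular) autocorrelation of `x ∈ ℂ^N`, as a function on `ℤ`. -/
noncomputable def aut {N : ℕ} (x : Fin N → ℂ) (j : ℤ) : ℂ :=
  ∑ k : Fin N, extz x (((k : ℕ) : ℤ) + j) * (starRingEnd ℂ) (extz x ((k : ℕ) : ℤ))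

/-- Circular convolution on `ℂ^N`. -/
noncomputable def cconv {N : ℕ} (v x : Fin N → ℂ) (j : Fin N) : ℂ :=
  ∑ k : Fin N, v k * x (j - k)

/-- The ℓ² norm on `ℂ^N`. -/
noncomputable def l2 {N : ℕ} (x : Fin N → ℂ) : ℝ :=
  Real.sqrt (∑ k : Fin N, ‖x k‖ ^ 2)

/-- The circular finite-difference operator. -/
noncomputable def nabla {N : ℕ} [NeZero N] (x : Fin N → ℂ) (k : Fin N) : ℂ :=
  x (k + 1) - x k

/-- The sup norm on `ℂ^N`. -/
noncomputable def linf {N : ℕ} [NeZero N] (x : Fin N → ℂ) : ℝ :=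
  Finset.univ.sup' Finset.univ_nonempty (fun k => ‖x k‖)

/-- The sup norm on `ℝ^N`. -/
noncomputable def linfR {N : ℕ} [NeZero N] (x : Fin N → ℝ) : ℝ :=
  Finset.univ.sup' Finset.univ_nonempty (fun k => |x k|)

/-- Cyclic index shift: `k ↦ (k + s) mod N`. -/
def shiftIdx {N : ℕ} [NeZero N] (k : Fin N) (s : ℕ) : Fin N :=
  ⟨((k : ℕ) + s) % N, Nat.mod_lt _ (Nat.pos_of_ne_zero (NeZero.ne N))⟩

/-- A window of length `W` with constant value `a`, extended by zero. -/
noncomputable def win (W : ℕ) (a : ℂ) (i : ℤ) : ℂ :=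
  if 0 ≤ i ∧ i < (W : ℤ) then a else 0


open Complex ComplexConjugate

theorem Fin.natCast_dvd_val_sub_val_iff {N : ℕ} (k l : Fin N) :
    (N : ℤ) ∣ (l : ℕ) - (k : ℕ) ↔ l = k := by
  refine ⟨fun hd => ?_, fun h => by simp [h]⟩
  have h0 : ((l : ℕ) : ℤ) - (k : ℕ) = 0 :=
    Int.eq_zero_of_abs_lt_dvd hd (abs_lt.2 ⟨by omega, by omega⟩)
  exact Fin.ext (by omega)

theorem eq_one_of_le_one_of_sum_eq_card {ι : Type*} [Fintype ι] {f : ι → ℝ}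
    (hf : ∀ i, f i ≤ 1)
    (hsum : ∑ i, f i = Fintype.card ι) (i : ι) : f i = 1 := by
  rw [← mul_one (Fintype.card ι : ℝ), ← nsmul_eq_mul, ← card_univ, ← sum_const] at hsum
  exact (sum_eq_sum_iff_of_le fun i _ => hf i).1 hsum i (mem_univ i)

section DFT

variable {N : ℕ} [NeZero N]

theorem sum_exp_two_pi_I_int_mul_div (m : ℤ) :
    ∑ n : Fin N, exp (2 * Real.pi * I * m * (n : ℕ) / N) =
      if (N : ℤ) ∣ m then (N : ℂ) else 0 := by
  have hζ := isPrimitiveRoot_exp N (NeZero.ne N)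
  set c := exp (2 * Real.pi * I / N) ^ m with hc
  have hterm (n : ℕ) : exp (2 * Real.pi * I * m * n / N) = c ^ n := by
    rw [hc, ← exp_int_mul, ← exp_nat_mul]
    ring_nf
  simp_rw [hterm, Fin.sum_univ_eq_sum_range (c ^ ·)]
  split_ifs with hm
  · simp [hc, (hζ.zpow_eq_one_iff_dvd m).2 hm]
  · have hc1 : c ≠ 1 := fun h => hm ((hζ.zpow_eq_one_iff_dvd m).1 h)
    have hcN : c ^ N = 1 := by
      rw [hc, ← zpow_natCast, ← zpow_mul, mul_comm m, zpow_mul, zpow_natCast, hζ.pow_eq_one,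
        one_zpow]
    have := mul_geom_sum c N
    rw [hcN, sub_self] at this
    simpa using (mul_eq_zero.1 this).resolve_left (sub_ne_zero.2 hc1)

theorem sum_norm_sq_dft (x : Fin N → ℂ) :
    ∑ n, ‖dft x n‖ ^ 2 = N * ∑ k, ‖x k‖ ^ 2 := by
  apply ofReal_injective
  push_cast
  simp_rw [← mul_conj']
  have hexpand (n : Fin N) : dft x n * conj (dft x n) = ∑ k, ∑ l, x k * conj (x l) *
      exp (2 * Real.pi * I * (((l : ℕ) - (k : ℕ) : ℤ) : ℂ) * (n : ℕ) / N) := by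
    rw [dft, map_sum, sum_mul_sum]
    refine sum_congr rfl fun k _ => sum_congr rfl fun l _ => ?_
    rw [map_mul, ← exp_conj, mul_mul_mul_comm, ← exp_add]
    congr 2
    simp only [map_div₀, map_mul, map_neg, conj_I, map_ofNat, conj_ofReal, map_natCast]
    push_cast
    ring
  calc ∑ n, dft x n * conj (dft x n)
      = ∑ k, ∑ l, x k * conj (x l) * ∑ n : Fin N,
          exp (2 * Real.pi * I * (((l : ℕ) - (k : ℕ) : ℤ) : ℂ) * (n : ℕ) / N) := by
        simp_rw [hexpand, mul_sum]
        rw [sum_comm]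
        exact sum_congr rfl fun k _ => sum_comm
    _ = N * ∑ k, x k * conj (x k) := by
        simp only [sum_exp_two_pi_I_int_mul_div, Fin.natCast_dvd_val_sub_val_iff, mul_ite, mul_zero,
          sum_ite_eq', mem_univ, if_true, mul_sum]
        exact sum_congr rfl fun _ _ => mul_comm _ _

theorem dft_zero (x : Fin N → ℂ) : dft x 0 = ∑ k, x k := by
  simp [dft]

variable {x y : Fin N → ℝ}

theorem sum_sq_eq_of_norm_dft_eq
    (h : ∀ n, ‖dft (fun k => (x k : ℂ)) n‖ = ‖dft (fun k => (y k : ℂ)) n‖) :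
    ∑ k, x k ^ 2 = ∑ k, y k ^ 2 := by
  have := sum_norm_sq_dft (fun k => (x k : ℂ))
  rw [sum_congr rfl fun n _ => by rw [h n], sum_norm_sq_dft,
    mul_right_inj' (Nat.cast_ne_zero.2 (NeZero.ne N))] at this
  simpa [Complex.norm_real] using this.symm

theorem abs_sum_eq_of_norm_dft_eq
    (h : ∀ n, ‖dft (fun k => (x k : ℂ)) n‖ = ‖dft (fun k => (y k : ℂ)) n‖) :
    |∑ k, x k| = |∑ k, y k| := by
  simpa [dft_zero, ← Complex.ofReal_sum, Complex.norm_real] using h 0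

end DFT

section SignVectors

variable {ι : Type*} [Fintype ι] {x y : ι → ℝ}

theorem card_filter_eq_one_add_card_filter_eq_neg_one (hx : ∀ i, x i = -1 ∨ x i = 1) :
    #{i | x i = 1} + #{i | x i = -1} = Fintype.card ι := by
  have hneg : filter (fun i => x i = -1) univ = filter (fun i => ¬x i = 1) univ :=
    filter_congr fun i _ => ⟨fun h => by norm_num [h], (hx i).resolve_right⟩
  rw [hneg, card_filter_add_card_filter_not, card_univ]

theorem sum_eq_card_filter_eq_one_sub_card_filter_eq_neg_one (hx : ∀ i, x i = -1 ∨ x i = 1) :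
    ∑ i, x i = #{i | x i = 1} - #{i | x i = -1} := by
  calc ∑ i, x i = ∑ i, ((if x i = 1 then 1 else 0) - (if x i = -1 then 1 else 0)) :=
        sum_congr rfl fun i _ => by rcases hx i with h | h <;> norm_num [h]
    _ = _ := by rw [sum_sub_distrib, sum_boole, sum_boole]

theorem card_filter_eq_one_eq_or_of_abs_sum_eq (hx : ∀ i, x i = -1 ∨ x i = 1)
    (hy : ∀ i, y i = -1 ∨ y i = 1) (h : |∑ i, x i| = |∑ i, y i|) :
    #{i | y i = 1} = #{i | x i = 1} ∨ #{i | y i = 1} = #{i | x i = -1} := by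
  have hxN : ((#{i | x i = 1} : ℕ) : ℝ) + #{i | x i = -1} = Fintype.card ι := by
    exact_mod_cast card_filter_eq_one_add_card_filter_eq_neg_one hx
  have hyN : ((#{i | y i = 1} : ℕ) : ℝ) + #{i | y i = -1} = Fintype.card ι := by
    exact_mod_cast card_filter_eq_one_add_card_filter_eq_neg_one hy
  rw [sum_eq_card_filter_eq_one_sub_card_filter_eq_neg_one hx,
    sum_eq_card_filter_eq_one_sub_card_filter_eq_neg_one hy] at h
  rcases abs_eq_abs.1 h with h | h
  · left; exact_mod_cast (by linarith : ((#{i | y i = 1} : ℕ) : ℝ) = #{i | x i = 1})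
  · right; exact_mod_cast (by linarith : ((#{i | y i = 1} : ℕ) : ℝ) = #{i | x i = -1})

end SignVectors

open scoped Classical in
/-- box relaxation for `{-1,1}`-valued signals. -/
theorem box_to_pm_one {N : ℕ} [NeZero N] (x y : Fin N → ℝ)
    (hx : ∀ k, x k = -1 ∨ x k = 1) (hy : ∀ k, -1 ≤ y k ∧ y k ≤ 1)
    (h : ∀ n : Fin N, ‖dft (fun k => (x k : ℂ)) n‖ =
      ‖dft (fun k => (y k : ℂ)) n‖) :
    (∀ k, y k = -1 ∨ y k = 1) ∧
    ((Finset.univ.filter fun k => y k = 1).card =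
        (Finset.univ.filter fun k => x k = 1).card ∨
      (Finset.univ.filter fun k => y k = 1).card =
        (Finset.univ.filter fun k => x k = -1).card) := by
  have hx_sq (k : Fin N) : x k ^ 2 = 1 := by rcases hx k with hk | hk <;> norm_num [hk]
  have hy_sq : ∀ k, y k ^ 2 = 1 := by
    refine eq_one_of_le_one_of_sum_eq_card (fun k => ?_) ?_
    · exact (sq_le_one_iff_abs_le_one _).2 (abs_le.2 (hy k))
    · simp [← sum_sq_eq_of_norm_dft_eq h, hx_sq]
  have hy_pm (k : Fin N) : y k = -1 ∨ y k = 1 := (sq_eq_one_iff.1 (hy_sq k)).symm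
  exact ⟨hy_pm, card_filter_eq_one_eq_or_of_abs_sum_eq hx hy_pm (abs_sum_eq_of_norm_dft_eq h)⟩
end

section
/- Let N be a positive integer and M ≥ 2N−1 an integer. Let x ∈ {0,1}^N be a binary vector satisfying x_0 = 1 and the palindromic condition x_n = x_{N−1−n} for all n = 0,…,N−1. If y ∈ {0,1}^N is any binary vector with |(F_M y)_n| = |(F_M x)_n| for all n = 0,…,M−1, then y = x. -/
open scoped BigOperators
open Finset

/-!
For `M ≥ 2N - 1` the `M`-point inverse DFT of `|F_M z|²` returns the aperiodic autocorrelation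
`a_z(j) = ∑ₖ z_{k+j} conj z_k`, `0 ≤ j < N`, without aliasing, so `x` and `y` have the same
autocorrelation. For bits, lag `N - 1` gives `y₀ y_{N-1} = x₀ x_{N-1} = 1`. Lag `N - 1 - m` is
`z_{N-1-m} z₀ + z_{N-1} z_m` plus products of entries with indices in `[0, m) ∪ (N-1-m, N-1]`, so
by induction on `m` it yields `y_{N-1-m} + y_m = x_{N-1-m} + x_m = 2 x_m` (palindromicity), and two
bits summing to `2 x_m` both equal `x_m`.
-/
open Complex ComplexConjugate
open scoped Real

lemma sum_exp_two_pi_I_mul_div {M : ℕ} (hM : M ≠ 0) (d : ℤ) :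
    ∑ n : Fin M, exp (2 * π * I * d * ((n : ℕ) : ℂ) / M) = if (M : ℤ) ∣ d then (M : ℂ) else 0 := by
  have hω := isPrimitiveRoot_exp M hM
  set ζ := exp (2 * π * I / M) ^ d
  have hterm (n : ℕ) : exp (2 * π * I * d * (n : ℂ) / M) = ζ ^ n := by
    rw [← zpow_natCast, ← zpow_mul, ← exp_int_mul]
    congr 1
    push_cast
    ring
  simp only [hterm, Fin.sum_univ_eq_sum_range (ζ ^ ·)]
  split_ifs with hd
  · simp [ζ, (hω.zpow_eq_one_iff_dvd d).2 hd]
  · have hζ : ζ ≠ 1 := fun h => hd ((hω.zpow_eq_one_iff_dvd d).1 h)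
    have hζM : ζ ^ M = 1 := by
      rw [← zpow_natCast, ← zpow_mul, mul_comm d, zpow_mul, zpow_natCast, hω.pow_eq_one, one_zpow]
    rw [geom_sum_eq hζ, hζM, sub_self, zero_div]

lemma natCast_dvd_sub_add_iff {N M j k l : ℕ} (hM : 2 * N - 1 ≤ M) (hj : j < N) (hk : k < N)
    (hl : l < N) : (M : ℤ) ∣ (j : ℤ) - k + l ↔ k = l + j := by
  constructor
  · intro h
    have := Int.eq_zero_of_abs_lt_dvd h (by rw [abs_lt]; omega)
    omega
  · rintro rfl
    simp

lemma extz_natCast {N : ℕ} (z : Fin N → ℂ) (i : ℕ) :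
    extz z i = if h : i < N then z ⟨i, h⟩ else 0 := by
  by_cases h : i < N <;> simp [extz, h]

lemma sum_ite_eq_extz {N : ℕ} (z : Fin N → ℂ) (i : ℕ) :
    ∑ k : Fin N, (if (k : ℕ) = i then z k else 0) = extz z i := by
  rw [extz_natCast]
  split_ifs with h
  · simpa [Fin.ext_iff] using sum_ite_eq' univ (⟨i, h⟩ : Fin N) z
  · exact sum_eq_zero fun k _ => if_neg (by omega)

lemma norm_odft_sq_mul_exp {N : ℕ} (M : ℕ) (z : Fin N → ℂ) (n : Fin M) (j : ℕ) :
    (‖odft M z n‖ : ℂ) ^ 2 * exp (2 * π * I * j * ((n : ℕ) : ℂ) / M) =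
      ∑ k : Fin N, ∑ l : Fin N,
        z k * conj (z l) * exp (2 * π * I * (((j : ℤ) - k + l : ℤ) : ℂ) * ((n : ℕ) : ℂ) / M) := by
  rw [← mul_conj', odft, map_sum, sum_mul_sum, sum_mul]
  refine sum_congr rfl fun k _ => ?_
  rw [sum_mul]
  refine sum_congr rfl fun l _ => ?_
  have hexp : exp (2 * π * I * (((j : ℤ) - k + l : ℤ) : ℂ) * ((n : ℕ) : ℂ) / M) =
      exp (-2 * π * I * ((k : ℕ) : ℂ) * ((n : ℕ) : ℂ) / M) *
        conj (exp (-2 * π * I * ((l : ℕ) : ℂ) * ((n : ℕ) : ℂ) / M)) *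
        exp (2 * π * I * j * ((n : ℕ) : ℂ) / M) := by
    rw [← exp_conj, ← exp_add, ← exp_add]
    congr 1
    simp only [map_div₀, map_mul, map_neg, map_ofNat, conj_ofReal, conj_I, map_natCast]
    push_cast
    ring
  rw [hexp, map_mul]
  ring

theorem sum_norm_odft_sq_mul_exp {N M : ℕ} (hM : 2 * N - 1 ≤ M) (z : Fin N → ℂ) {j : ℕ}
    (hj : j < N) :
    ∑ n : Fin M, (‖odft M z n‖ : ℂ) ^ 2 * exp (2 * π * I * j * ((n : ℕ) : ℂ) / M) =
      M * aut z j := by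
  calc _ = ∑ k : Fin N, ∑ l : Fin N, z k * conj (z l) *
        ∑ n : Fin M, exp (2 * π * I * (((j : ℤ) - k + l : ℤ) : ℂ) * ((n : ℕ) : ℂ) / M) := by
        simp only [norm_odft_sq_mul_exp, mul_sum]
        rw [sum_comm]
        exact sum_congr rfl fun k _ => sum_comm
    _ = ∑ k : Fin N, ∑ l : Fin N, z k * conj (z l) * if (k : ℕ) = l + j then (M : ℂ) else 0 := by
        refine sum_congr rfl fun k _ => sum_congr rfl fun l _ => ?_
        simp only [sum_exp_two_pi_I_mul_div (by omega : M ≠ 0),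
          natCast_dvd_sub_add_iff hM hj k.isLt l.isLt]
    _ = ∑ l : Fin N, M * (extz z ((l + j : ℕ) : ℤ) * conj (z l)) := by
        rw [sum_comm]
        refine sum_congr rfl fun l _ => ?_
        rw [← sum_ite_eq_extz, sum_mul, mul_sum]
        refine sum_congr rfl fun k _ => ?_
        split_ifs <;> ring
    _ = M * aut z j := by
        simp [aut, mul_sum, extz_natCast]

theorem aut_eq_of_norm_odft_eq {N M : ℕ} (hM : 2 * N - 1 ≤ M) {y x : Fin N → ℂ}
    (h : ∀ n : Fin M, ‖odft M y n‖ = ‖odft M x n‖) {j : ℕ} (hj : j < N) : aut y j = aut x j := by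
  have hM0 : (M : ℂ) ≠ 0 := Nat.cast_ne_zero.2 (by omega)
  apply mul_left_cancel₀ hM0
  rw [← sum_norm_odft_sq_mul_exp hM y hj, ← sum_norm_odft_sq_mul_exp hM x hj]
  simp only [h]

section Autocorrelation

variable {R : Type*} [CommRing R]

def autocorrelation (N : ℕ) (a : ℕ → R) (j : ℕ) : R :=
  ∑ k ∈ range (N - j), a (k + j) * a k

lemma autocorrelation_sub_one_sub {N m : ℕ} (a : ℕ → R) (hm : m < N) :
    autocorrelation N a (N - 1 - m) = ∑ k ∈ range (m + 1), a (N - 1 - (m - k)) * a k := by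
  rw [autocorrelation, show N - (N - 1 - m) = m + 1 by omega]
  refine sum_congr rfl fun k hk => ?_
  rw [mem_range] at hk
  rw [show k + (N - 1 - m) = N - 1 - (m - k) by omega]

lemma autocorrelation_sub_one_sub_succ {N m : ℕ} (a : ℕ → R) (hm : m + 1 < N) :
    autocorrelation N a (N - 1 - (m + 1)) =
      a (N - 1 - (m + 1)) * a 0 + ∑ k ∈ range m, a (N - 1 - (m - k)) * a (k + 1) +
        a (N - 1) * a (m + 1) := by
  rw [autocorrelation_sub_one_sub a hm, sum_range_succ, sum_range_succ']
  simp only [Nat.add_sub_add_right, Nat.sub_self, Nat.sub_zero]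
  ring

lemma eq_one_and_eq_one_of_mul_eq_one [Nontrivial R] {p q : R} (hp : p = 0 ∨ p = 1)
    (hq : q = 0 ∨ q = 1) (h : p * q = 1) : p = 1 ∧ q = 1 := by
  rcases hp with rfl | rfl <;> rcases hq with rfl | rfl <;> simp_all

lemma eq_and_eq_of_add_eq_add_self [CharZero R] {p q c : R} (hp : p = 0 ∨ p = 1)
    (hq : q = 0 ∨ q = 1) (hc : c = 0 ∨ c = 1) (h : p + q = c + c) : p = c ∧ q = c := by
  rcases hp with rfl | rfl <;> rcases hq with rfl | rfl <;> rcases hc with rfl | rfl <;>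
    first | exact ⟨rfl, rfl⟩ | norm_num at h

theorem eq_of_autocorrelation_eq_of_palindromic [CharZero R] {N : ℕ} {a b : ℕ → R}
    (ha : ∀ i < N, a i = 0 ∨ a i = 1) (hb : ∀ i < N, b i = 0 ∨ b i = 1) (ha0 : a 0 = 1)
    (hpal : ∀ i < N, a (N - 1 - i) = a i)
    (hab : ∀ j < N, autocorrelation N b j = autocorrelation N a j) :
    ∀ i < N, b i = a i := by
  rcases N.eq_zero_or_pos with rfl | hN
  · simp
  have haN : a (N - 1) = 1 := by simpa [ha0] using hpal 0 hN
  have hends : b (N - 1) = 1 ∧ b 0 = 1 := by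
    have h := hab (N - 1) (by omega)
    simp only [autocorrelation, show N - (N - 1) = 1 by omega, sum_range_one, zero_add, haN, ha0,
      mul_one] at h
    exact eq_one_and_eq_one_of_mul_eq_one (hb (N - 1) (by omega)) (hb 0 hN) h
  have hpair : ∀ m, 2 * m ≤ N - 1 → b m = a m ∧ b (N - 1 - m) = a (N - 1 - m) := by
    intro m
    induction m using Nat.strong_induction_on with
    | _ m ih =>
      intro hm
      rcases m with _ | m
      · simp [hends, ha0, haN]
      have hinner : ∑ k ∈ range m, b (N - 1 - (m - k)) * b (k + 1) =
          ∑ k ∈ range m, a (N - 1 - (m - k)) * a (k + 1) := by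
        refine sum_congr rfl fun k hk => ?_
        rw [mem_range] at hk
        rw [(ih (m - k) (by omega) (by omega)).2, (ih (k + 1) (by omega) (by omega)).1]
      have h := hab (N - 1 - (m + 1)) (by omega)
      rw [autocorrelation_sub_one_sub_succ b (by omega),
        autocorrelation_sub_one_sub_succ a (by omega), hinner, hends.1, hends.2, ha0, haN,
        hpal _ (by omega)] at h
      obtain ⟨h₁, h₂⟩ := eq_and_eq_of_add_eq_add_self (hb (N - 1 - (m + 1)) (by omega))
        (hb (m + 1) (by omega)) (ha (m + 1) (by omega)) (by linear_combination h)
      exact ⟨h₂, h₁.trans (hpal _ (by omega)).symm⟩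
  intro i hi
  rcases le_or_gt (2 * i) (N - 1) with h | h
  · exact (hpair i h).1
  · simpa [show N - 1 - (N - 1 - i) = i by omega] using (hpair (N - 1 - i) (by omega)).2

end Autocorrelation

lemma aut_eq_autocorrelation {N : ℕ} (z : Fin N → ℂ) (hz : ∀ k, conj (z k) = z k) (j : ℕ) :
    aut z j = autocorrelation N (fun i : ℕ => extz z i) j := by
  have hconj (i : ℕ) : conj (extz z i) = extz z i := by
    rw [extz_natCast]
    split_ifs <;> simp [hz]
  calc aut z j = ∑ k ∈ range N, extz z ((k + j : ℕ) : ℤ) * extz z k := by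
        rw [aut, ← Fin.sum_univ_eq_sum_range (fun k => extz z ((k + j : ℕ) : ℤ) * extz z k)]
        simp [hconj]
    _ = autocorrelation N (fun i : ℕ => extz z i) j := by
        refine (sum_subset (range_subset_range.2 (Nat.sub_le N j)) fun k _ hk => ?_).symm
        rw [mem_range] at hk
        rw [extz_natCast z (k + j), dif_neg (by omega), zero_mul]

/-- palindromic binary signals are uniquely recoverable from
`M ≥ 2N−1` oversampled Fourier magnitudes. -/
theorem palindromic_uniqueness {N M : ℕ} [NeZero N] (hM : 2 * N - 1 ≤ M)
    (x y : Fin N → ℝ) (hx : ∀ k, x k = 0 ∨ x k = 1)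
    (hx0 : x ⟨0, Nat.pos_of_ne_zero (NeZero.ne N)⟩ = 1)
    (hpal : ∀ n : Fin N, x n = x ⟨N - 1 - (n : ℕ), by omega⟩)
    (hy : ∀ k, y k = 0 ∨ y k = 1)
    (h : ∀ n : Fin M, ‖odft M (fun k => (y k : ℂ)) n‖ =
      ‖odft M (fun k => (x k : ℂ)) n‖) :
    y = x := by
  have hbinary {w : Fin N → ℝ} (hw : ∀ k, w k = 0 ∨ w k = 1) (i : ℕ) (hi : i < N) :
      extz (fun k => (w k : ℂ)) i = 0 ∨ extz (fun k => (w k : ℂ)) i = 1 := by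
    rw [extz_natCast, dif_pos hi]
    exact_mod_cast hw ⟨i, hi⟩
  have hcorr (j : ℕ) (hj : j < N) :
      autocorrelation N (fun i : ℕ => extz (fun k => (y k : ℂ)) i) j =
        autocorrelation N (fun i : ℕ => extz (fun k => (x k : ℂ)) i) j := by
    rw [← aut_eq_autocorrelation _ (fun _ => conj_ofReal _),
      ← aut_eq_autocorrelation _ (fun _ => conj_ofReal _)]
    exact aut_eq_of_norm_odft_eq hM h hj
  have hxpal (i : ℕ) (hi : i < N) :
      extz (fun k => (x k : ℂ)) (N - 1 - i : ℕ) = extz (fun k => (x k : ℂ)) i := by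
    simp [extz_natCast, hi, show N - 1 - i < N by omega, hpal ⟨i, hi⟩]
  have hrec := eq_of_autocorrelation_eq_of_palindromic (hbinary hx) (hbinary hy)
    (by simp only [extz_natCast, dif_pos (NeZero.pos N)]; exact_mod_cast hx0) hxpal hcorr
  funext k
  simpa [extz_natCast] using hrec k k.isLt
end

section
/- Let N be a positive integer and let x ∈ {0,1}^N be a nonzero binary vector. Let b ∈ ℝ^N be defined by b_n = |(F x)_n|, and let b̃ = b + η for some η ∈ ℂ^N. If ‖η‖_∞ < 1/(8‖x‖₀), then ‖F⁻¹(b̃ ⊙ b̃) − Aut_p(x)‖_∞ < 1/2. -/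
open scoped BigOperators
open Finset

/-!
By the Wiener–Khinchin identity `F⁻¹(|F x|²) = Aut_p x`, the error equals `F⁻¹(b̃ ⊙ b̃ − b ⊙ b)`,
and `F⁻¹` does not increase the sup norm. Entrywise `b̃² − b² = 2bη + η²`, and for binary `x`
we have `b ≤ ‖x‖₁ = ‖x‖₀ =: s`, so the error is at most `2sε + ε² < 1/4 + 1/64` when `ε < 1/(8s)`.
-/

open Complex ComplexConjugate

lemma idft_sub {N : ℕ} (u v : Fin N → ℂ) (j : Fin N) :
    idft (fun n => u n - v n) j = idft u j - idft v j := by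
  simp only [idft, sub_mul, Finset.sum_sub_distrib, mul_sub]

variable {N : ℕ} [NeZero N]

lemma exp_two_pi_I_div_pow_mod (a : ℕ) :
    exp (2 * Real.pi * I / N) ^ (a % N) = exp (2 * Real.pi * I / N) ^ a :=
  (pow_eq_pow_mod a (isPrimitiveRoot_exp N (NeZero.ne N)).pow_eq_one).symm

namespace Fin

/-- The additive character `m ↦ exp(2πi m / N)` of `Fin N`. -/
noncomputable def expChar (N : ℕ) (m : Fin N) : ℂ :=
  exp (2 * Real.pi * I / N) ^ (m : ℕ)

lemma expChar_add (a b : Fin N) : expChar N (a + b) = expChar N a * expChar N b := by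
  rw [expChar, expChar, expChar, ← pow_add, Fin.val_add, exp_two_pi_I_div_pow_mod]

lemma expChar_neg (a : Fin N) : expChar N (-a) = (expChar N a)⁻¹ := by
  refine (inv_eq_of_mul_eq_one_right ?_).symm
  rw [← expChar_add, add_neg_cancel, expChar, Fin.val_zero, pow_zero]

lemma expChar_eq_one_iff {a : Fin N} : expChar N a = 1 ↔ a = 0 := by
  rw [expChar, (isPrimitiveRoot_exp N (NeZero.ne N)).pow_eq_one_iff_dvd, Fin.ext_iff, Fin.val_zero]
  exact ⟨fun h => Nat.eq_zero_of_dvd_of_lt h a.isLt, fun h => h ▸ dvd_zero N⟩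

lemma norm_expChar (a : Fin N) : ‖expChar N a‖ = 1 := by
  rw [expChar, norm_pow, (isPrimitiveRoot_exp N (NeZero.ne N)).norm'_eq_one (NeZero.ne N), one_pow]

lemma conj_expChar (a : Fin N) : conj (expChar N a) = expChar N (-a) := by
  rw [expChar_neg, inv_eq_conj (norm_expChar a)]

lemma exp_two_pi_I_mul_div_eq_expChar (j n : Fin N) :
    exp (2 * Real.pi * I * ((j : ℕ) : ℂ) * ((n : ℕ) : ℂ) / N) = expChar N (j * n) := by
  rw [expChar, Fin.val_mul, exp_two_pi_I_div_pow_mod, ← Complex.exp_nat_mul]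
  push_cast
  ring_nf

lemma exp_neg_two_pi_I_mul_div_eq_expChar (k n : Fin N) :
    exp (-2 * Real.pi * I * ((k : ℕ) : ℂ) * ((n : ℕ) : ℂ) / N) = expChar N (-(k * n)) := by
  rw [expChar_neg, ← exp_two_pi_I_mul_div_eq_expChar, ← Complex.exp_neg]
  ring_nf

lemma sum_expChar_mul (m : Fin N) :
    ∑ n : Fin N, expChar N (m * n) = if m = 0 then (N : ℂ) else 0 := by
  split_ifs with hm
  · simp [hm, expChar]
  · -- the sum is invariant under the shift `n ↦ n + 1`, which multiplies it by `expChar N m ≠ 1`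
    have hshift :
        expChar N m * ∑ n : Fin N, expChar N (m * n) = ∑ n : Fin N, expChar N (m * n) := by
      rw [Finset.mul_sum]
      exact Fintype.sum_equiv (Equiv.addRight 1) _ _ fun n => by
        simp [mul_add, expChar_add, mul_comm]
    have hzero : (expChar N m - 1) * ∑ n : Fin N, expChar N (m * n) = 0 := by
      rw [sub_mul, hshift, one_mul, sub_self]
    exact (mul_eq_zero.mp hzero).resolve_left (sub_ne_zero.mpr (expChar_eq_one_iff.not.mpr hm))

end Fin

open Fin

lemma dft_eq_sum_expChar (y : Fin N → ℂ) (n : Fin N) :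
    dft y n = ∑ k, y k * expChar N (-(k * n)) := by
  simp only [dft, exp_neg_two_pi_I_mul_div_eq_expChar]

lemma idft_eq_sum_expChar (u : Fin N → ℂ) (j : Fin N) :
    idft u j = (1 / N) * ∑ n, u n * expChar N (j * n) := by
  simp only [idft, exp_two_pi_I_mul_div_eq_expChar]

/-- Wiener–Khinchin theorem. -/
theorem idft_mul_conj_dft (y : Fin N → ℂ) (j : Fin N) :
    idft (fun n => dft y n * conj (dft y n)) j = autp y j := by
  have hN : (N : ℂ) ≠ 0 := Nat.cast_ne_zero.mpr (NeZero.ne N)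
  calc idft (fun n => dft y n * conj (dft y n)) j
      = (1 / N) * ∑ n, ∑ l, ∑ k, y k * conj (y l) * expChar N ((l + j - k) * n) := by
        rw [idft_eq_sum_expChar]
        congr 1
        refine Finset.sum_congr rfl fun n _ => ?_
        rw [dft_eq_sum_expChar, map_sum, Finset.sum_mul_sum]
        simp only [Finset.sum_mul]
        conv_lhs => rw [Finset.sum_comm]
        refine Finset.sum_congr rfl fun l _ => ?_
        refine Finset.sum_congr rfl fun k _ => ?_
        have hexp : (l + j - k) * n = -(k * n) + l * n + j * n := by
          rw [sub_mul, add_mul]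
          abel
        rw [map_mul, conj_expChar, neg_neg, hexp, expChar_add, expChar_add]
        ring
    _ = (1 / N) * ∑ l, ∑ k, y k * conj (y l) * ∑ n, expChar N ((l + j - k) * n) := by
        congr 1
        rw [Finset.sum_comm]
        refine Finset.sum_congr rfl fun l _ => ?_
        rw [Finset.sum_comm]
        simp only [Finset.mul_sum]
    _ = autp y j := by
        simp only [sum_expChar_mul, sub_eq_zero, mul_ite, mul_zero, Finset.sum_ite_eq,
          Finset.mem_univ, if_true, autp, Finset.mul_sum]
        refine Finset.sum_congr rfl fun l _ => ?_
        field_simp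

lemma norm_le_linf (u : Fin N → ℂ) (n : Fin N) : ‖u n‖ ≤ linf u :=
  Finset.le_sup' (fun k => ‖u k‖) (Finset.mem_univ n)

lemma linf_le {u : Fin N → ℂ} {c : ℝ} (h : ∀ n, ‖u n‖ ≤ c) : linf u ≤ c :=
  Finset.sup'_le _ _ fun n _ => h n

lemma norm_idft_le_linf (u : Fin N → ℂ) (j : Fin N) : ‖idft u j‖ ≤ linf u := by
  have hN : (0 : ℝ) < N := Nat.cast_pos.mpr (NeZero.pos N)
  rw [idft_eq_sum_expChar, norm_mul, norm_div, norm_one, Complex.norm_natCast, one_div,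
    inv_mul_le_iff₀ hN]
  calc ‖∑ n, u n * expChar N (j * n)‖ ≤ ∑ n, ‖u n * expChar N (j * n)‖ := norm_sum_le _ _
    _ ≤ ∑ _n : Fin N, linf u := Finset.sum_le_sum fun n _ => by
        rw [norm_mul, norm_expChar, mul_one]
        exact norm_le_linf u n
    _ = N * linf u := by simp

lemma norm_dft_le_sum_norm (y : Fin N → ℂ) (n : Fin N) : ‖dft y n‖ ≤ ∑ k, ‖y k‖ := by
  rw [dft_eq_sum_expChar]
  refine (norm_sum_le _ _).trans_eq (Finset.sum_congr rfl fun k _ => ?_)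
  rw [norm_mul, norm_expChar, mul_one]

lemma sum_abs_le_card_support {ι : Type*} [Fintype ι] (x : ι → ℝ) [DecidablePred fun k => x k ≠ 0]
    (hx : ∀ k, |x k| ≤ 1) : ∑ k, |x k| ≤ (Finset.univ.filter fun k => x k ≠ 0).card := by
  rw [← Finset.sum_filter_of_ne fun k _ h => abs_ne_zero.mp h]
  simpa using Finset.sum_le_sum fun k (_ : k ∈ Finset.univ.filter fun k => x k ≠ 0) => hx k

lemma norm_add_mul_add_sub_mul_le {b B ε : ℝ} {η : ℂ} (hb : |b| ≤ B) (hη : ‖η‖ ≤ ε) :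
    ‖((b : ℂ) + η) * ((b : ℂ) + η) - b * b‖ ≤ 2 * B * ε + ε ^ 2 := by
  calc ‖((b : ℂ) + η) * ((b : ℂ) + η) - b * b‖ = ‖2 * (b : ℂ) * η + η ^ 2‖ := by ring_nf
    _ ≤ 2 * |b| * ‖η‖ + ‖η‖ ^ 2 := by
        refine (norm_add_le _ _).trans_eq ?_
        simp [Complex.norm_real]
    _ ≤ 2 * B * ε + ε ^ 2 := by
        have hB : 0 ≤ B := (abs_nonneg b).trans hb
        gcongr

open scoped Classical in
theorem denoise_autp_binary_general {N : ℕ} [NeZero N] (x : Fin N → ℝ)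
    (hx : ∀ k, x k = 0 ∨ x k = 1) (b : Fin N → ℝ)
    (hb : ∀ n, b n = ‖dft (fun k => (x k : ℂ)) n‖)
    (η : Fin N → ℂ)
    (hη : linf η < 1 / (8 * ((Finset.univ.filter fun k => x k ≠ 0).card : ℝ))) :
    linf (fun j => idft (fun n => ((b n : ℂ) + η n) * ((b n : ℂ) + η n)) j
      - autp (fun k => (x k : ℂ)) j) < 1 / 2 := by
  set s : ℝ := ((Finset.univ.filter fun k => x k ≠ 0).card : ℝ)
  set ε := linf η
  have hε : 0 ≤ ε := (norm_nonneg _).trans (norm_le_linf η 0)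
  have hs : 1 ≤ s := by
    have hs_pos : 0 < s := by linarith [one_div_pos.mp (hε.trans_lt hη)]
    exact Nat.one_le_cast.mpr (Nat.cast_pos.mp hs_pos)
  have hbs : ∀ n, |b n| ≤ s := fun n => by
    rw [hb n, abs_norm]
    refine (norm_dft_le_sum_norm _ n).trans ?_
    simpa only [Complex.norm_real, Real.norm_eq_abs] using
      sum_abs_le_card_support x fun k => by rcases hx k with h | h <;> simp [h]
  have hautp : autp (fun k => (x k : ℂ)) = idft (fun n => (b n : ℂ) * b n) := by
    ext j
    rw [← idft_mul_conj_dft]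
    simp only [hb, mul_conj', sq]
  calc _ ≤ 2 * s * ε + ε ^ 2 := linf_le fun j => by
        rw [hautp, ← idft_sub]
        exact (norm_idft_le_linf _ j).trans
          (linf_le fun n => norm_add_mul_add_sub_mul_le (hbs n) (norm_le_linf η n))
    _ < 1 / 2 := by
        have h8 : ε * (8 * s) < 1 := (lt_div_iff₀ (by positivity)).mp hη
        nlinarith

open scoped Classical in
/-- denoising error bound for sparse binary signals. -/
theorem denoise_autp_binary {N : ℕ} [NeZero N] (x : Fin N → ℝ)
    (hx : ∀ k, x k = 0 ∨ x k = 1) (hx0 : x ≠ 0) (b : Fin N → ℝ)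
    (hb : ∀ n, b n = ‖dft (fun k => (x k : ℂ)) n‖)
    (η : Fin N → ℂ)
    (hη : linf η < 1 / (8 * ((Finset.univ.filter fun k => x k ≠ 0).card : ℝ))) :
    linf (fun j => idft (fun n => ((b n : ℂ) + η n) * ((b n : ℂ) + η n)) j
      - autp (fun k => (x k : ℂ)) j) < 1 / 2 :=
  denoise_autp_binary_general x hx b hb η hη
end
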